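/- In the multigraph on vertices {1,2,3,4} with edges {12, 13, 14, 23, 24, 34, 14', 24', 34'} (where 14' is parallel to 14, etc.), the edge set can be partitioned into three spanning trees, but there is no partition into three spanning trees T_1, T_2, T_3 such that each of the sets {14, 14', 23}, {24, 24', 13}, {34, 34', 12} has exactly one edge in each T_j. -/

import Mathlib

open Set Function Matroid SimpleGraph

/-- The endpoint map of McDiarmid's multigraph: `K₄` on `{0,1,2,3}` (vertex `3`
playing the role of vertex `4`) with the three edges at vertex `3` duplicated.
Edges `0..8` are `12, 13, 14, 23, 24, 34, 14', 24', 34'`. -/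
def mcdEnds : Fin 9 → Sym2 (Fin 4) :=
  ![s(0, 1), s(0, 2), s(0, 3), s(1, 2), s(1, 3), s(2, 3), s(0, 3), s(1, 3), s(2, 3)]

/-- A set of multigraph edges is acyclic: no two parallel edges, and the
underlying simple graph is acyclic. -/
def McdAcyclic (S : Set (Fin 9)) : Prop :=
  Set.InjOn mcdEnds S ∧ (SimpleGraph.fromEdgeSet (mcdEnds '' S)).IsAcyclic

/-- A spanning tree of McDiarmid's multigraph (as a set of edges). -/
def McdSpanningTree (T : Set (Fin 9)) : Prop :=
  McdAcyclic T ∧ (SimpleGraph.fromEdgeSet (mcdEnds '' T)).Connected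

/-- The row sets `I₁ = {14, 14', 23}`, `I₂ = {24, 24', 13}`, `I₃ = {34, 34', 12}`. -/
def mcdRows : Fin 3 → Set (Fin 9) :=
  ![{2, 6, 3}, {4, 7, 1}, {5, 8, 0}]


/-!
The edges `23, 13, 12` avoiding vertex `4` are the odd edges, one in each row. A tree meeting
every row exactly once and containing an odd number of odd edges contains a triangle: either all
three odd edges, or one odd edge `jk` together with the copies of `j4` and `k4` that it must take
from the other two rows. Hence each of the three trees contains an even number of odd edges, which
is impossible since together they contain all three.
-/

theorem Set.existsUnique_mem_of_pairwise_disjoint_of_iUnion_eq_univ {ι α : Type*}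
    {T : ι → Set α} (hdisj : Pairwise (Disjoint on T)) (hcover : ⋃ j, T j = univ) (x : α) :
    ∃! j, x ∈ T j := by
  obtain ⟨j, hj⟩ := mem_iUnion.1 (hcover ▸ mem_univ x)
  exact ⟨j, hj, fun k hk => of_not_not fun hne => (hdisj hne).notMem_of_mem_left hk hj⟩

theorem Finset.sum_card_filter_eq_card_of_existsUnique {ι β : Type*} [Fintype ι]
    (s : Finset β) (p : ι → β → Prop) [∀ j, DecidablePred (p j)]
    (h : ∀ b ∈ s, ∃! j, p j b) : ∑ j, (s.filter (p j)).card = s.card := by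
  simp only [Finset.card_filter]
  rw [Finset.sum_comm, Finset.card_eq_sum_ones]
  refine Finset.sum_congr rfl fun b hb => ?_
  obtain ⟨j, hj, huniq⟩ := h b hb
  rw [Finset.sum_eq_single j (fun k _ hk => if_neg fun hk' => hk (huniq k hk'))
    (fun hj' => (hj' (Finset.mem_univ j)).elim), if_pos hj]

abbrev mcdGraph (T : Set (Fin 9)) : SimpleGraph (Fin 4) :=
  fromEdgeSet (mcdEnds '' T)

instance (T : Set (Fin 9)) [DecidablePred (· ∈ T)] : DecidablePred (· ∈ mcdEnds '' T) :=
  fun e => decidable_of_iff (∃ x, x ∈ T ∧ mcdEnds x = e) Iff.rfl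

def mcdTreePartition : Fin 3 → Finset (Fin 9) :=
  ![{0, 1, 4}, {2, 3, 8}, {5, 6, 7}]

theorem mcdSpanningTree_mcdTreePartition (j : Fin 3) : McdSpanningTree (mcdTreePartition j) := by
  refine ⟨⟨?_, ?_⟩, ?_⟩
  · unfold Set.InjOn
    revert j
    decide
  · rw [isAcyclic_iff_forall_adj_isBridge]
    simp only [isBridge_iff]
    revert j
    decide
  · revert j
    decide

theorem pairwise_disjoint_mcdTreePartition :
    Pairwise (Disjoint on fun j => (mcdTreePartition j : Set (Fin 9))) := by
  intro i j hij
  rw [onFun, Finset.disjoint_coe]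
  revert i j
  decide

theorem iUnion_mcdTreePartition : ⋃ j, (mcdTreePartition j : Set (Fin 9)) = univ := by
  rw [Set.iUnion_eq_univ_iff]
  decide

/-- The edge of `mcdRows i` not incident to vertex `3`. -/
def mcdOdd : Fin 3 → Fin 9 :=
  ![3, 1, 0]

theorem mcdEnds_eq_of_mem_mcdRows_of_ne_mcdOdd {i : Fin 3} {e : Fin 9} (he : e ∈ mcdRows i)
    (hne : e ≠ mcdOdd i) : mcdEnds e = s(i.castSucc, 3) := by
  fin_cases i <;> obtain rfl | rfl | rfl := he <;> first | rfl | exact absurd rfl hne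

theorem mcdGraph_adj_of_mem {T : Set (Fin 9)} {e : Fin 9} {v w : Fin 4} (he : e ∈ T)
    (hends : mcdEnds e = s(v, w)) (hvw : v ≠ w) : (mcdGraph T).Adj v w :=
  (fromEdgeSet_adj _).2 ⟨⟨e, he, hends⟩, hvw⟩

theorem mcdGraph_adj_castSucc_of_mcdOdd_notMem {T : Set (Fin 9)} {i : Fin 3}
    (hrow : (mcdRows i ∩ T).ncard = 1) (hi : mcdOdd i ∉ T) : (mcdGraph T).Adj i.castSucc 3 := by
  obtain ⟨e, he⟩ := Set.ncard_eq_one.1 hrow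
  have heT : e ∈ mcdRows i ∩ T := he ▸ rfl
  exact mcdGraph_adj_of_mem heT.2
    (mcdEnds_eq_of_mem_mcdRows_of_ne_mcdOdd heT.1 fun h => hi (h ▸ heT.2))
    (Fin.castSucc_lt_last i).ne

theorem even_card_mcdOdd_mem {T : Set (Fin 9)} [DecidablePred (· ∈ T)]
    (hT : (mcdGraph T).IsAcyclic) (hrows : ∀ i, (mcdRows i ∩ T).ncard = 1) :
    Even (Finset.univ.filter fun i => mcdOdd i ∈ T).card := by
  have no_triangle (a b c : Fin 4) (hab : (mcdGraph T).Adj a b) (hac : (mcdGraph T).Adj a c)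
      (hbc : (mcdGraph T).Adj b c) : False :=
    hT.cliqueFree le_rfl {a, b, c} (is3Clique_triple_iff.2 ⟨hab, hac, hbc⟩)
  have star_adj (i : Fin 3) := mcdGraph_adj_castSucc_of_mcdOdd_notMem (hrows i)
  rw [Finset.card_filter, Fin.sum_univ_three]
  by_cases h0 : mcdOdd 0 ∈ T <;> by_cases h1 : mcdOdd 1 ∈ T <;> by_cases h2 : mcdOdd 2 ∈ T
  · exact (no_triangle 0 1 2 (mcdGraph_adj_of_mem h2 rfl (by decide))
      (mcdGraph_adj_of_mem h1 rfl (by decide)) (mcdGraph_adj_of_mem h0 rfl (by decide))).elim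
  · simp [h0, h1, h2]
  · simp [h0, h1, h2]
  · exact (no_triangle 1 2 3 (mcdGraph_adj_of_mem h0 rfl (by decide)) (star_adj 1 h1)
      (star_adj 2 h2)).elim
  · simp [h0, h1, h2]
  · exact (no_triangle 0 2 3 (mcdGraph_adj_of_mem h1 rfl (by decide)) (star_adj 0 h0)
      (star_adj 2 h2)).elim
  · exact (no_triangle 0 1 3 (mcdGraph_adj_of_mem h2 rfl (by decide)) (star_adj 0 h0)
      (star_adj 1 h1)).elim
  · simp [h0, h1, h2]

/-- The multigraph's edge set can be partitioned into three spanning trees, but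
never so that each of the three sets `{14,14',23}, {24,24',13}, {34,34',12}`
has exactly one edge in each tree. -/
theorem mcdiarmid_trees :
    (∃ T : Fin 3 → Set (Fin 9), (∀ j, McdSpanningTree (T j)) ∧
      Pairwise (Function.onFun Disjoint T) ∧ (⋃ j, T j) = univ) ∧
    ¬ ∃ T : Fin 3 → Set (Fin 9), (∀ j, McdSpanningTree (T j)) ∧
        Pairwise (Function.onFun Disjoint T) ∧ (⋃ j, T j) = univ ∧
        ∀ i j, (mcdRows i ∩ T j).ncard = 1 := by
  refine ⟨⟨_, mcdSpanningTree_mcdTreePartition, pairwise_disjoint_mcdTreePartition,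
    iUnion_mcdTreePartition⟩, ?_⟩
  rintro ⟨T, htree, hdisj, hcover, hrows⟩
  classical
  have hsum : ∑ j, (Finset.univ.filter fun i => mcdOdd i ∈ T j).card = 3 :=
    Finset.sum_card_filter_eq_card_of_existsUnique _ _ fun i _ =>
      existsUnique_mem_of_pairwise_disjoint_of_iUnion_eq_univ hdisj hcover (mcdOdd i)
  have heven : Even (∑ j, (Finset.univ.filter fun i => mcdOdd i ∈ T j).card) :=
    Finset.even_sum _ fun j _ => even_card_mcdOdd_mem (htree j).1.2 fun i => hrows i j
  exact absurd (hsum ▸ heven) (by decide)
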